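/- Effect subsumption is transitive: if φ₁ ⊑ φ₂ and φ₂ ⊑ φ₃ are derivable in the subsumption system (with rules sb-≡, sb-⊥, sb-×-above, sb-×-below¹, sb-×-below², sb-⊔-above, sb-⊔-below¹, sb-⊔-below²), then φ₁ ⊑ φ₃ is derivable. -/

import Mathlib

/-- Effects of the Spegion calculus over a type `R` of region names,
with sizes drawn from the extended naturals `ℕ∞`. -/
inductive Effect (R : Type) : Type
  | bot : Effect R
  | fresh : R → ℕ∞ → Effect R
  | free : R → Effect R
  | split : R → ℕ∞ → R → Effect R
  | alloc : ℕ∞ → R → Effect R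
  | comp : Effect R → Effect R → Effect R
  | join : Effect R → Effect R → Effect R

/-- Effect equality `≡`: the least relation closed under reflexivity, symmetry,
transitivity, congruence under `×` and `⊔`, and associativity of `×` and `⊔`. -/
inductive EffEq {R : Type} : Effect R → Effect R → Prop
  | refl (φ : Effect R) : EffEq φ φ
  | symm {φ₁ φ₂ : Effect R} : EffEq φ₁ φ₂ → EffEq φ₂ φ₁
  | trans {φ₁ φ₂ φ₃ : Effect R} : EffEq φ₁ φ₂ → EffEq φ₂ φ₃ → EffEq φ₁ φ₃
  | compCong {φ₁ φ₂ φ₃ φ₄ : Effect R} :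
      EffEq φ₁ φ₂ → EffEq φ₃ φ₄ → EffEq (Effect.comp φ₁ φ₃) (Effect.comp φ₂ φ₄)
  | joinCong {φ₁ φ₂ φ₃ φ₄ : Effect R} :
      EffEq φ₁ φ₂ → EffEq φ₃ φ₄ → EffEq (Effect.join φ₁ φ₃) (Effect.join φ₂ φ₄)
  | compAssoc (φ₁ φ₂ φ₃ : Effect R) :
      EffEq (Effect.comp (Effect.comp φ₁ φ₂) φ₃) (Effect.comp φ₁ (Effect.comp φ₂ φ₃))
  | joinAssoc (φ₁ φ₂ φ₃ : Effect R) :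
      EffEq (Effect.join (Effect.join φ₁ φ₂) φ₃) (Effect.join φ₁ (Effect.join φ₂ φ₃))

/-- Effect subsumption `⊑` of the Spegion calculus (all effects assumed well-formed). -/
inductive ESub {R : Type} : Effect R → Effect R → Prop
  | ofEq {φ₁ φ₂ : Effect R} : EffEq φ₁ φ₂ → ESub φ₁ φ₂
  | bot (φ : Effect R) : ESub Effect.bot φ
  | compAbove {φ₁ φ₂ φ₃ : Effect R} :
      ESub φ₁ φ₃ → ESub φ₂ φ₃ → ESub (Effect.comp φ₁ φ₂) φ₃
  | compBelow₁ {φ₁ φ₂ : Effect R} (φ₃ : Effect R) :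
      ESub φ₁ φ₂ → ESub φ₁ (Effect.comp φ₂ φ₃)
  | compBelow₂ {φ₁ φ₂ : Effect R} (φ₃ : Effect R) :
      ESub φ₁ φ₂ → ESub φ₁ (Effect.comp φ₃ φ₂)
  | joinAbove {φ₁ φ₂ φ₃ : Effect R} :
      ESub φ₁ φ₃ → ESub φ₂ φ₃ → ESub (Effect.join φ₁ φ₂) φ₃
  | joinBelow₁ {φ₁ φ₂ : Effect R} (φ₃ : Effect R) :
      ESub φ₁ φ₂ → ESub φ₁ (Effect.join φ₂ φ₃)
  | joinBelow₂ {φ₁ φ₂ : Effect R} (φ₃ : Effect R) :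
      ESub φ₁ φ₂ → ESub φ₁ (Effect.join φ₃ φ₂)

/-!
Subsumption is decided by atoms: `φ ⊑ ψ` holds exactly when every atom other than `⊥`
occurring in `φ` also occurs in `ψ`. Associativity does not change the list of atoms read
left to right, every rule of `⊑` preserves the inclusion of atoms, and conversely an inclusion
of atoms is realised by splitting `φ` with the `-above` rules and reaching each atom inside `ψ`
with the `-below` rules. Inclusion of atoms is transitive, hence so is `⊑`.
-/

namespace Effect

variable {R : Type}

def atoms : Effect R → List (Effect R)
  | bot => []
  | comp φ ψ => atoms φ ++ atoms ψ
  | join φ ψ => atoms φ ++ atoms ψ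
  | φ => [φ]

end Effect

open Effect

variable {R : Type}

theorem EffEq.atoms_eq {φ ψ : Effect R} (h : EffEq φ ψ) : φ.atoms = ψ.atoms := by
  induction h with
  | refl => rfl
  | symm _ ih => exact ih.symm
  | trans _ _ ih₁ ih₂ => exact ih₁.trans ih₂
  | compCong _ _ ih₁ ih₂ | joinCong _ _ ih₁ ih₂ => simp only [atoms, ih₁, ih₂]
  | compAssoc | joinAssoc => simp only [atoms, List.append_assoc]

theorem ESub.refl (φ : Effect R) : ESub φ φ :=
  .ofEq (.refl φ)

theorem ESub.of_mem_atoms {a φ : Effect R} (h : a ∈ φ.atoms) : ESub a φ := by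
  induction φ with
  | bot => simp [atoms] at h
  | comp _ _ ih₁ ih₂ =>
    rcases List.mem_append.mp h with h | h
    · exact .compBelow₁ _ (ih₁ h)
    · exact .compBelow₂ _ (ih₂ h)
  | join _ _ ih₁ ih₂ =>
    rcases List.mem_append.mp h with h | h
    · exact .joinBelow₁ _ (ih₁ h)
    · exact .joinBelow₂ _ (ih₂ h)
  | fresh | free | split | alloc =>
    rw [List.mem_singleton.mp h]
    exact .refl _

theorem ESub.of_atoms_subset {φ ψ : Effect R} (h : φ.atoms ⊆ ψ.atoms) : ESub φ ψ := by
  induction φ with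
  | bot => exact .bot ψ
  | comp _ _ ih₁ ih₂ =>
    obtain ⟨h₁, h₂⟩ := List.append_subset.mp h
    exact .compAbove (ih₁ h₁) (ih₂ h₂)
  | join _ _ ih₁ ih₂ =>
    obtain ⟨h₁, h₂⟩ := List.append_subset.mp h
    exact .joinAbove (ih₁ h₁) (ih₂ h₂)
  | fresh | free | split | alloc => exact .of_mem_atoms (h (List.mem_singleton_self _))

theorem ESub.atoms_subset {φ ψ : Effect R} (h : ESub φ ψ) : φ.atoms ⊆ ψ.atoms := by
  induction h with
  | ofEq h => exact h.atoms_eq ▸ List.Subset.refl _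
  | bot => exact List.nil_subset _
  | compAbove _ _ ih₁ ih₂ | joinAbove _ _ ih₁ ih₂ =>
    exact List.append_subset.mpr ⟨ih₁, ih₂⟩
  | compBelow₁ _ _ ih | joinBelow₁ _ _ ih => exact List.subset_append_of_subset_left _ ih
  | compBelow₂ _ _ ih | joinBelow₂ _ _ ih => exact List.subset_append_of_subset_right _ ih

theorem ESub.iff_atoms_subset {φ ψ : Effect R} : ESub φ ψ ↔ φ.atoms ⊆ ψ.atoms :=
  ⟨atoms_subset, of_atoms_subset⟩

/-- Effect subsumption is transitive. -/
theorem sub_trans {R : Type} (φ₁ φ₂ φ₃ : Effect R) :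
    ESub φ₁ φ₂ → ESub φ₂ φ₃ → ESub φ₁ φ₃ := by
  simp only [ESub.iff_atoms_subset]
  exact List.Subset.trans
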